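/- arXiv:2506.06423 — 2 statements merged into one kernel-verified Lean document; each statement's English description precedes it below -/
import Mathlib

section
/- Let Y be a complex 3×3 matrix with SVD Y = U_L · diag(y₁, y₂, y₃) · U_R†, 0 ≤ y₁ ≤ y₂ ≤ y₃, y₃² > 2y₂², and let α index a longest row of Y. Then (|U_{L,α1}|² + |U_{L,α2}|²)/|U_{L,α3}|² ≤ X, where X = (2y₃² − y₂²)/(y₃² − 2y₂²). In particular U_{L,α3} ≠ 0. -/
/-!
The squared row norms of `Y = U_L D U_Rᴴ` are the weighted averages `∑ᵢ yᵢ² |U_{L,ji}|²`, and they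
add up to `∑ᵢ yᵢ²`. The longest row therefore carries at least a third of this total. Since
`y₁ ≤ y₂`, the weights on `y₁²` and `y₂²` contribute at most `y₂² (1 - |U_{L,α3}|²)`, so
`|U_{L,α3}|² ≥ (y₃² - 2y₂²) / (3 (y₃² - y₂²))`, which is the claimed bound on the ratio.
(Indices here are the paper's, from 1; in Lean they run from 0.)
-/

open Matrix

namespace Matrix

variable {𝕜 m n : Type*} [RCLike 𝕜] [Fintype n]

theorem mul_conjTranspose_self_apply_self (A : Matrix m n 𝕜) (i : m) :
    (A * Aᴴ) i i = ((∑ k, ‖A i k‖ ^ 2 : ℝ) : 𝕜) := by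
  simp only [mul_apply, conjTranspose_apply, ← starRingEnd_apply, RCLike.mul_conj]
  push_cast
  rfl

theorem sum_norm_sq_row_eq_of_mul_conjTranspose_eq {A B : Matrix m n 𝕜}
    (h : A * Aᴴ = B * Bᴴ) (i : m) : ∑ k, ‖A i k‖ ^ 2 = ∑ k, ‖B i k‖ ^ 2 := by
  have := congrFun (congrFun h i) i
  rwa [mul_conjTranspose_self_apply_self, mul_conjTranspose_self_apply_self,
    RCLike.ofReal_inj] at this

variable [DecidableEq n]

theorem sum_norm_sq_row_of_mem_unitaryGroup {U : Matrix n n 𝕜}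
    (hU : U ∈ unitaryGroup n 𝕜) (i : n) : ∑ k, ‖U i k‖ ^ 2 = 1 := by
  have := congrFun (congrFun (mem_unitaryGroup_iff.mp hU) i) i
  rwa [star_eq_conjTranspose, mul_conjTranspose_self_apply_self, one_apply_eq,
    ← RCLike.ofReal_one, RCLike.ofReal_inj] at this

theorem sum_norm_sq_col_of_mem_unitaryGroup {U : Matrix n n 𝕜}
    (hU : U ∈ unitaryGroup n 𝕜) (k : n) : ∑ i, ‖U i k‖ ^ 2 = 1 := by
  simpa [norm_star] using
    sum_norm_sq_row_of_mem_unitaryGroup (Unitary.star_mem hU) k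

theorem mul_conjTranspose_mul_mul_conjTranspose_self_of_mem_unitaryGroup
    (B : Matrix m n 𝕜) {V : Matrix n n 𝕜} (hV : V ∈ unitaryGroup n 𝕜) :
    B * Vᴴ * (B * Vᴴ)ᴴ = B * Bᴴ := by
  rw [conjTranspose_mul, conjTranspose_conjTranspose, Matrix.mul_assoc, ← Matrix.mul_assoc Vᴴ,
    ← star_eq_conjTranspose, mem_unitaryGroup_iff'.mp hV, Matrix.one_mul]

theorem sum_norm_sq_row_mul_diagonal_mul_conjTranspose {U V : Matrix n n 𝕜}
    (hV : V ∈ unitaryGroup n 𝕜) (d : n → ℝ) (i : n) :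
    ∑ k, ‖(U * diagonal (fun j => (d j : 𝕜)) * Vᴴ) i k‖ ^ 2 = ∑ j, d j ^ 2 * ‖U i j‖ ^ 2 := by
  rw [sum_norm_sq_row_eq_of_mul_conjTranspose_eq
    (mul_conjTranspose_mul_mul_conjTranspose_self_of_mem_unitaryGroup _ hV)]
  simp only [mul_diagonal, norm_mul, RCLike.norm_ofReal, mul_pow, sq_abs, mul_comm]

theorem sum_sum_norm_sq_mul_diagonal_mul_conjTranspose {U V : Matrix n n 𝕜}
    (hU : U ∈ unitaryGroup n 𝕜) (hV : V ∈ unitaryGroup n 𝕜) (d : n → ℝ) :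
    ∑ i, ∑ k, ‖(U * diagonal (fun j => (d j : 𝕜)) * Vᴴ) i k‖ ^ 2 = ∑ j, d j ^ 2 := by
  simp only [sum_norm_sq_row_mul_diagonal_mul_conjTranspose hV, Finset.sum_comm (γ := n),
    ← Finset.mul_sum, sum_norm_sq_col_of_mem_unitaryGroup hU, mul_one]

end Matrix

theorem ratio_le_of_three_mul_weighted_sum_ge {a₀ a₁ a₂ y₀ y₁ y₂ : ℝ} (ha₀ : 0 ≤ a₀)
    (ha : a₀ + a₁ + a₂ = 1) (hy₀ : 0 ≤ y₀) (h₀₁ : y₀ ≤ y₁) (hgap : 2 * y₁ ^ 2 < y₂ ^ 2)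
    (hmax : y₀ ^ 2 + y₁ ^ 2 + y₂ ^ 2 ≤ 3 * (y₀ ^ 2 * a₀ + y₁ ^ 2 * a₁ + y₂ ^ 2 * a₂)) :
    0 < a₂ ∧ (a₀ + a₁) / a₂ ≤ (2 * y₂ ^ 2 - y₁ ^ 2) / (y₂ ^ 2 - 2 * y₁ ^ 2) := by
  have hy : y₀ ^ 2 ≤ y₁ ^ 2 := pow_le_pow_left₀ hy₀ h₀₁ 2
  have key : y₂ ^ 2 - 2 * y₁ ^ 2 ≤ 3 * (y₂ ^ 2 - y₁ ^ 2) * a₂ := by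
    nlinarith
  have ha₂ : 0 < a₂ := by nlinarith
  refine ⟨ha₂, ?_⟩
  rw [div_le_div_iff₀ ha₂ (by linarith)]
  nlinarith

theorem longest_row_component_ratio_upper_bound_general
    (Y U_L U_R : Matrix (Fin 3) (Fin 3) ℂ) (y : Fin 3 → ℝ) (α : Fin 3)
    (hUL : U_L ∈ Matrix.unitaryGroup (Fin 3) ℂ)
    (hUR : U_R ∈ Matrix.unitaryGroup (Fin 3) ℂ)
    (hy0 : 0 ≤ y 0) (h01 : y 0 ≤ y 1)
    (hgap : 2 * (y 1)^2 < (y 2)^2)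
    (hSVD : Y = U_L * Matrix.diagonal (fun i => (y i : ℂ)) * U_Rᴴ)
    (hα : ∀ j, ∑ k, ‖Y j k‖^2 ≤ ∑ k, ‖Y α k‖^2) :
    (‖U_L α 0‖^2 + ‖U_L α 1‖^2) / ‖U_L α 2‖^2
      ≤ (2 * (y 2)^2 - (y 1)^2) / ((y 2)^2 - 2 * (y 1)^2) ∧
    U_L α 2 ≠ 0 := by
  have hrow (j : Fin 3) : ∑ k, ‖Y j k‖ ^ 2 = ∑ i, y i ^ 2 * ‖U_L j i‖ ^ 2 := by
    rw [hSVD]; exact sum_norm_sq_row_mul_diagonal_mul_conjTranspose hUR y j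
  have htotal : ∑ j, ∑ k, ‖Y j k‖ ^ 2 = ∑ i, y i ^ 2 := by
    rw [hSVD]; exact sum_sum_norm_sq_mul_diagonal_mul_conjTranspose hUL hUR y
  have hmax : ∑ i, y i ^ 2 ≤ 3 * ∑ i, y i ^ 2 * ‖U_L α i‖ ^ 2 := by
    rw [← htotal, ← hrow]
    simpa using Finset.sum_le_card_nsmul Finset.univ _ _ fun j _ => hα j
  have hunit := sum_norm_sq_row_of_mem_unitaryGroup hUL α
  simp only [Fin.sum_univ_three] at hunit hmax
  obtain ⟨hpos, hratio⟩ := ratio_le_of_three_mul_weighted_sum_ge (sq_nonneg _) hunit hy0 h01 hgap hmax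
  exact ⟨hratio, by simpa using hpos.ne'⟩

/-- Lemma 1, second inequality: for the longest row α of Y,
`(|U_{L,α1}|² + |U_{L,α2}|²)/|U_{L,α3}|² ≤ X`, and in particular `U_{L,α3} ≠ 0`. -/
theorem longest_row_component_ratio_upper_bound
    (Y U_L U_R : Matrix (Fin 3) (Fin 3) ℂ) (y : Fin 3 → ℝ) (α : Fin 3)
    (hUL : U_L ∈ Matrix.unitaryGroup (Fin 3) ℂ)
    (hUR : U_R ∈ Matrix.unitaryGroup (Fin 3) ℂ)
    (hy0 : 0 ≤ y 0) (h01 : y 0 ≤ y 1) (h12 : y 1 ≤ y 2)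
    (hgap : 2 * (y 1)^2 < (y 2)^2)
    (hSVD : Y = U_L * Matrix.diagonal (fun i => (y i : ℂ)) * U_Rᴴ)
    (hα : ∀ j, ∑ k, ‖Y j k‖^2 ≤ ∑ k, ‖Y α k‖^2) :
    (‖U_L α 0‖^2 + ‖U_L α 1‖^2) / ‖U_L α 2‖^2
      ≤ (2 * (y 2)^2 - (y 1)^2) / ((y 2)^2 - 2 * (y 1)^2) ∧
    U_L α 2 ≠ 0 :=
  longest_row_component_ratio_upper_bound_general Y U_L U_R y α hUL hUR hy0 h01 hgap hSVD hα
end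

section
/- Let Y be a complex 3×3 matrix with SVD Y = U_L · diag(y₁, y₂, y₃) · U_R†, 0 < y₁ ≤ y₂ ≤ y₃. Let Ỹ be the cofactor matrix of Y, β a longest column index of Y, δ a longest column index of Ỹ, with both corresponding column norms positive. Define ε = (Y† Ỹ*)_{βδ} / (√((Y†Y)_{ββ}) · √((Ỹ†Ỹ)_{δδ})). Then |ε| ≤ 3 (y₁/y₃), and moreover ε = 0 whenever β ≠ δ. -/
open Matrix

lemma frob_eq' (M : Matrix (Fin 3) (Fin 3) ℂ) :
    ∑ j, ∑ k, ‖M k j‖^2 = (Matrix.trace (Mᴴ * M)).re := by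
  simp only [Matrix.trace, Matrix.diag, Matrix.mul_apply, Matrix.conjTranspose_apply,
    Complex.re_sum]
  congr 1; ext j; congr 1; ext k
  rw [Complex.star_def, Complex.conj_mul']
  norm_cast

lemma det_norm_one' (U : Matrix (Fin 3) (Fin 3) ℂ) (h1 : Uᴴ * U = 1) :
    ‖U.det‖ = 1 := by
  have h3 : star U.det * U.det = 1 := by
    rw [← Matrix.det_conjTranspose, ← Matrix.det_mul, h1, Matrix.det_one]
  have h4 := congrArg (fun z : ℂ => ‖z‖) h3
  simp only [norm_mul, norm_one, norm_star] at h4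
  nlinarith [norm_nonneg U.det]

lemma ratio_bound' (a b c N M : ℝ) (hy0 : 0 < a)
    (hy1 : 0 < b) (hy2 : 0 < c)
    (hN : 0 < N) (hM : 0 < M)
    (hNb : c ^ 2 / 3 ≤ N) (hNd : (b * c) ^ 2 / 3 ≤ M) :
    (a * b * c) / (Real.sqrt N * Real.sqrt M) ≤ 3 * (a / c) := by
  have hab : b * c ^ 2 / 3 ≤ Real.sqrt N * Real.sqrt M := by
    rw [← Real.sqrt_mul hN.le]
    have h1 : (b * c ^ 2 / 3) ^ 2 ≤ N * M := by nlinarith [sq_nonneg (c^2/3 - N)]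
    calc b * c ^ 2 / 3 = Real.sqrt ((b * c ^ 2 / 3) ^ 2) := (Real.sqrt_sq (by positivity)).symm
      _ ≤ Real.sqrt (N * M) := Real.sqrt_le_sqrt h1
  have hpos : (0:ℝ) < b * c ^ 2 / 3 := by positivity
  calc a * b * c / (Real.sqrt N * Real.sqrt M) ≤ a * b * c / (b * c ^ 2 / 3) :=
        div_le_div_of_nonneg_left (by positivity) hpos hab
    _ = 3 * (a / c) := by field_simp

set_option maxHeartbeats 1000000 in
/-- Bound on the overlap ε of the normalized longest column of Y with the normalized
conjugated longest column of the cofactor matrix Ỹ: `|ε| ≤ 3 y₁/y₃`, and `ε = 0` if the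
two column indices differ. -/
theorem epsilon_overlap_bound
    (Y U_L U_R Yt : Matrix (Fin 3) (Fin 3) ℂ) (y : Fin 3 → ℝ) (β δ : Fin 3) (ε : ℂ)
    (hUL : U_L ∈ Matrix.unitaryGroup (Fin 3) ℂ)
    (hUR : U_R ∈ Matrix.unitaryGroup (Fin 3) ℂ)
    (hy0 : 0 < y 0) (h01 : y 0 ≤ y 1) (h12 : y 1 ≤ y 2)
    (hSVD : Y = U_L * Matrix.diagonal (fun i => (y i : ℂ)) * U_Rᴴ)
    (hYt : Yt = (Matrix.adjugate Y)ᵀ)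
    (hβ : ∀ j, ∑ k, ‖Y k j‖^2 ≤ ∑ k, ‖Y k β‖^2)
    (hδ : ∀ j, ∑ k, ‖Yt k j‖^2 ≤ ∑ k, ‖Yt k δ‖^2)
    (hNβ : 0 < ∑ k, ‖Y k β‖^2)
    (hNδ : 0 < ∑ k, ‖Yt k δ‖^2)
    (hε : ε = (Yᴴ * Yt.map (starRingEnd ℂ)) β δ
        / (((Real.sqrt (∑ k, ‖Y k β‖^2) : ℝ) : ℂ) * ((Real.sqrt (∑ k, ‖Yt k δ‖^2) : ℝ) : ℂ))) :
    ‖ε‖ ≤ 3 * (y 0 / y 2) ∧ (β ≠ δ → ε = 0) := by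
  have hy1 : 0 < y 1 := lt_of_lt_of_le hy0 h01
  have hy2 : 0 < y 2 := lt_of_lt_of_le hy1 h12
  set D := Matrix.diagonal (fun i => (y i : ℂ)) with hD
  have hUL1 : U_Lᴴ * U_L = 1 := Matrix.UnitaryGroup.star_mul_self ⟨U_L, hUL⟩
  have hUR1 : U_Rᴴ * U_R = 1 := Matrix.UnitaryGroup.star_mul_self ⟨U_R, hUR⟩
  have hUL2 : U_L * U_Lᴴ = 1 := mul_eq_one_comm.mp hUL1
  -- key entry identity
  have hentry : (Yᴴ * Yt.map (starRingEnd ℂ)) β δ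
      = starRingEnd ℂ (Y.det * (if δ = β then 1 else 0)) := by
    have h1 : (Yᴴ * Yt.map (starRingEnd ℂ)) β δ
        = starRingEnd ℂ ((Matrix.adjugate Y * Y) δ β) := by
      simp only [Matrix.mul_apply, Matrix.conjTranspose_apply, Matrix.map_apply, hYt,
        Matrix.transpose_apply, map_sum]
      congr 1; ext k
      rw [_root_.map_mul, mul_comm]; rfl
    rw [h1, Matrix.adjugate_mul]
    simp [Matrix.smul_apply, Matrix.one_apply]
  -- determinant norm
  have hdet : ‖Y.det‖ = y 0 * y 1 * y 2 := by
    rw [hSVD, Matrix.det_mul, Matrix.det_mul, norm_mul, norm_mul,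
      det_norm_one' U_L hUL1, Matrix.det_conjTranspose, norm_star,
      det_norm_one' U_R hUR1, hD, Matrix.det_diagonal]
    simp only [Fin.prod_univ_three, ← Complex.ofReal_mul, Complex.norm_real]
    rw [Real.norm_eq_abs, abs_of_pos (by positivity)]
    ring
  -- Frobenius norm of Y
  have hsumY : ∑ j, ∑ k, ‖Y k j‖^2 = y 0 ^ 2 + y 1 ^ 2 + y 2 ^ 2 := by
    rw [frob_eq']
    have h : Yᴴ * Y = U_R * (Dᴴ * D) * U_Rᴴ := by
      rw [hSVD]
      simp only [Matrix.conjTranspose_mul, Matrix.conjTranspose_conjTranspose, Matrix.mul_assoc]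
      rw [← Matrix.mul_assoc U_Lᴴ U_L, hUL1, Matrix.one_mul]
    rw [h, Matrix.trace_mul_cycle, ← Matrix.mul_assoc, hUR1, Matrix.one_mul]
    rw [hD, Matrix.diagonal_conjTranspose, Matrix.diagonal_mul_diagonal, Matrix.trace_diagonal]
    simp [Fin.sum_univ_three, ← Complex.ofReal_mul, Pi.star_apply, sq]
  -- Frobenius norm of Yt
  have hsumYt : ∑ j, ∑ k, ‖Yt k j‖^2
      = (y 1 * y 2) ^ 2 + (y 0 * y 2) ^ 2 + (y 0 * y 1) ^ 2 := by
    have hswap : ∑ j, ∑ k, ‖Yt k j‖^2 = ∑ j, ∑ k, ‖Y.adjugate k j‖^2 := by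
      simp only [hYt, Matrix.transpose_apply]
      exact Finset.sum_comm
    rw [hswap, frob_eq']
    set Dinv := Matrix.diagonal (fun i => ((y i : ℂ))⁻¹) with hDinv
    have hyne : ∀ i : Fin 3, (y i : ℂ) ≠ 0 := by
      intro i; fin_cases i <;> simp_all <;> positivity
    have hDDinv : D * Dinv = 1 := by
      rw [hD, hDinv, Matrix.diagonal_mul_diagonal]
      rw [show (fun i => (y i : ℂ) * ((y i : ℂ))⁻¹) = fun _ => 1 from funext fun i =>
        mul_inv_cancel₀ (hyne i), Matrix.diagonal_one]
    set Z := U_R * Dinv * U_Lᴴ with hZ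
    have hYZ : Y * Z = 1 := by
      rw [hSVD, hZ]
      simp only [Matrix.mul_assoc]
      rw [← Matrix.mul_assoc U_Rᴴ U_R, hUR1, Matrix.one_mul,
          ← Matrix.mul_assoc D Dinv, hDDinv, Matrix.one_mul, hUL2]
    have hA : Y.adjugate = Y.det • Z := by
      calc Y.adjugate = Y.adjugate * (Y * Z) := by rw [hYZ, mul_one]
        _ = (Y.adjugate * Y) * Z := by rw [Matrix.mul_assoc]
        _ = Y.det • Z := by rw [Matrix.adjugate_mul, Matrix.smul_mul, Matrix.one_mul]
    rw [hA]
    have hZZ : Zᴴ * Z = U_L * (Dinvᴴ * Dinv) * U_Lᴴ := by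
      rw [hZ]
      simp only [Matrix.conjTranspose_mul, Matrix.conjTranspose_conjTranspose, Matrix.mul_assoc]
      rw [← Matrix.mul_assoc U_Rᴴ U_R, hUR1, Matrix.one_mul]
    have hsm : (Y.det • Z)ᴴ * (Y.det • Z) = (star Y.det * Y.det) • (Zᴴ * Z) := by
      rw [Matrix.conjTranspose_smul, Matrix.smul_mul, Matrix.mul_smul, smul_smul]
    rw [hsm, Matrix.trace_smul, hZZ, Matrix.trace_mul_cycle, ← Matrix.mul_assoc, hUL1,
      Matrix.one_mul]
    rw [hDinv, Matrix.diagonal_conjTranspose, Matrix.diagonal_mul_diagonal,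
      Matrix.trace_diagonal]
    have hnd : star Y.det * Y.det = ((y 0 * y 1 * y 2) ^ 2 : ℝ) := by
      rw [Complex.star_def, Complex.conj_mul', ← hdet]
      push_cast
      ring
    rw [hnd]
    simp only [smul_eq_mul, Fin.sum_univ_three, Pi.star_apply, ← Complex.ofReal_inv,
      Complex.star_def, Complex.conj_ofReal, ← Complex.ofReal_mul, ← Complex.ofReal_add,
      Complex.ofReal_re]
    field_simp
  -- column bounds
  have hNb : y 2 ^ 2 / 3 ≤ ∑ k, ‖Y k β‖^2 := by
    have h0 := hβ 0; have h1 := hβ 1; have h2 := hβ 2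
    rw [Fin.sum_univ_three] at hsumY
    linarith [sq_nonneg (y 0), sq_nonneg (y 1)]
  have hNd : (y 1 * y 2) ^ 2 / 3 ≤ ∑ k, ‖Yt k δ‖^2 := by
    have h0 := hδ 0; have h1 := hδ 1; have h2 := hδ 2
    rw [Fin.sum_univ_three] at hsumYt
    linarith [sq_nonneg (y 0 * y 1), sq_nonneg (y 0 * y 2)]
  constructor
  · rcases eq_or_ne δ β with hbd | hbd
    · subst hbd
      rw [hε, hentry, if_pos rfl, mul_one, norm_div, norm_mul, RCLike.norm_conj,
        Complex.norm_real, Complex.norm_real, Real.norm_eq_abs, Real.norm_eq_abs,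
        abs_of_nonneg (Real.sqrt_nonneg _), abs_of_nonneg (Real.sqrt_nonneg _), hdet]
      exact ratio_bound' (y 0) (y 1) (y 2) _ _ hy0 hy1 hy2 hNβ hNδ hNb hNd
    · rw [hε, hentry, if_neg hbd, mul_zero, map_zero, zero_div, norm_zero]
      positivity
  · intro hne
    rw [hε, hentry, if_neg (fun h => hne h.symm), mul_zero, map_zero, zero_div]
end
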